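/- arXiv:2507.11555 — 2 statements merged into one kernel-verified Lean document; each statement's English description precedes it below -/
import Mathlib

section
/- Let p₁, q₁, p₂, q₂ be positive integers. Then p₁ + 2q₁ + sqrt(p₁² + 4q₁²) = p₂ + 2q₂ + sqrt(p₂² + 4q₂²) and p₁ + 2q₁ ≠ p₂ + 2q₂ together imply that both sqrt(p₁² + 4q₁²) and sqrt(p₂² + 4q₂²) are integers. -/
lemma sqrt_int_of_rat (z : ℤ) (hz : 0 ≤ z) (c : ℚ) (h : Real.sqrt z = (c : ℝ)) :
    ∃ r : ℤ, Real.sqrt z = r := by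
  have hni : ¬ Irrational (Real.sqrt z) := by
    rw [Irrational]
    push_neg
    exact ⟨c, h.symm⟩
  have hsq : IsSquare z := by
    by_contra hs
    exact hni ((irrational_sqrt_intCast_iff_of_nonneg hz).mpr hs)
  obtain ⟨r, hr⟩ := hsq
  refine ⟨|r|, ?_⟩
  rw [hr]
  push_cast
  rw [← pow_two, Real.sqrt_sq_eq_abs]

theorem stmt4 (p₁ q₁ p₂ q₂ : ℤ) (hp₁ : 0 < p₁) (hq₁ : 0 < q₁) (hp₂ : 0 < p₂) (hq₂ : 0 < q₂)
    (h1 : (p₁ : ℝ) + 2 * q₁ + Real.sqrt ((p₁ : ℝ) ^ 2 + 4 * (q₁ : ℝ) ^ 2)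
        = (p₂ : ℝ) + 2 * q₂ + Real.sqrt ((p₂ : ℝ) ^ 2 + 4 * (q₂ : ℝ) ^ 2))
    (h2 : p₁ + 2 * q₁ ≠ p₂ + 2 * q₂) :
    (∃ r₁ : ℤ, Real.sqrt ((p₁ : ℝ) ^ 2 + 4 * (q₁ : ℝ) ^ 2) = r₁) ∧
    (∃ r₂ : ℤ, Real.sqrt ((p₂ : ℝ) ^ 2 + 4 * (q₂ : ℝ) ^ 2) = r₂) := by
  set a₁ : ℤ := p₁ ^ 2 + 4 * q₁ ^ 2 with ha₁
  set a₂ : ℤ := p₂ ^ 2 + 4 * q₂ ^ 2 with ha₂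
  have ha₁nn : (0:ℤ) ≤ a₁ := by positivity
  have ha₂nn : (0:ℤ) ≤ a₂ := by positivity
  have hc₁ : ((p₁ : ℝ) ^ 2 + 4 * (q₁ : ℝ) ^ 2) = ((a₁ : ℤ) : ℝ) := by push_cast [ha₁]; ring
  have hc₂ : ((p₂ : ℝ) ^ 2 + 4 * (q₂ : ℝ) ^ 2) = ((a₂ : ℤ) : ℝ) := by push_cast [ha₂]; ring
  set s₁ := Real.sqrt ((a₁ : ℤ) : ℝ) with hs₁
  set s₂ := Real.sqrt ((a₂ : ℤ) : ℝ) with hs₂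
  rw [hc₁, hc₂] at h1 ⊢
  set d : ℤ := p₂ + 2 * q₂ - (p₁ + 2 * q₁) with hd
  have hdne : (d : ℝ) ≠ 0 := by
    simp only [hd]
    exact_mod_cast sub_ne_zero_of_ne (Ne.symm h2)
  have heq : s₁ = s₂ + d := by push_cast [hd]; linarith [h1]
  have hsq1 : s₁ ^ 2 = (a₁ : ℝ) := Real.sq_sqrt (by exact_mod_cast ha₁nn)
  have hsq2 : s₂ ^ 2 = (a₂ : ℝ) := Real.sq_sqrt (by exact_mod_cast ha₂nn)
  have hs2val : s₂ = (((a₁ - a₂ - d ^ 2 : ℤ) : ℚ) / (2 * d : ℤ) : ℚ) := by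
    have h2d : (2 * (d:ℝ)) ≠ 0 := by simpa using hdne
    have : s₂ * (2 * d) = (a₁ : ℝ) - a₂ - (d:ℝ) ^ 2 := by
      have h := hsq1
      rw [heq] at h
      nlinarith [hsq2, h]
    push_cast
    field_simp
    linarith [this]
  have hs1val : s₁ = ((((a₁ - a₂ - d ^ 2 : ℤ) : ℚ) / (2 * d : ℤ) + d : ℚ) : ℝ) := by
    rw [heq, hs2val]; push_cast; ring
  exact ⟨sqrt_int_of_rat a₁ ha₁nn _ hs1val, sqrt_int_of_rat a₂ ha₂nn _ hs2val⟩
end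

section
/- Let q₁, q₂, q₁', q₂' be positive integers such that q₁ + q₂ + sqrt(q₁² + q₂²) = q₁' + q₂' + sqrt(q₁'² + q₂'²), and suppose neither q₁² + q₂² nor q₁'² + q₂'² is a perfect square. Then {q₁, q₂} = {q₁', q₂'}. -/
/-!
Write `s = √(q₁² + q₂²)` and `s' = √(q₁'² + q₂'²)`. Since `s` is irrational, `s' = c + s` with
`c = q₁ + q₂ - q₁' - q₂'` forces `c = 0` (otherwise squaring makes `2cs` rational), hence
`s = s'`. So the pairs have the same sum and the same sum of squares, thus the same product,
and `{q₁, q₂} = {q₁', q₂'}` are the roots of one quadratic.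
-/

theorem Irrational.eq_and_eq_of_add_sqrt_eq {a b m n : ℚ} (hm : Irrational √(m : ℝ))
    (h : (a : ℝ) + √(m : ℝ) = b + √(n : ℝ)) : a = b ∧ m = n := by
  have hm_eq : √(m : ℝ) = ((b - a : ℚ) : ℝ) + √(n : ℝ) := by push_cast; linarith
  have hn : Irrational √(n : ℝ) := (hm_eq ▸ hm).of_ratCast_add
  have hn0 : 0 ≤ n := (irrational_sqrt_ratCast_iff.1 hn).2
  have hm0 : 0 ≤ m := (irrational_sqrt_ratCast_iff.1 hm).2
  have hsq : (m : ℝ) = ((b - a) ^ 2 + n : ℚ) + ((2 * (b - a) : ℚ) : ℝ) * √(n : ℝ) := by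
    rw [← Real.sq_sqrt (Rat.cast_nonneg.2 hm0), hm_eq, add_sq, Real.sq_sqrt (Rat.cast_nonneg.2 hn0)]
    push_cast
    ring
  have hab : a = b := by
    by_contra hne
    refine (hn.ratCast_mul (mul_ne_zero two_ne_zero (sub_ne_zero.2 (Ne.symm hne)))).ne_rat
      (m - ((b - a) ^ 2 + n)) ?_
    push_cast at hsq ⊢
    linarith
  subst hab
  exact ⟨rfl, by exact_mod_cast (by simpa using hsq : (m : ℝ) = n)⟩

theorem eq_and_eq_or_eq_and_eq_of_add_eq_of_sq_add_sq_eq {R : Type*} [CommRing R] [IsDomain R]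
    [NeZero (2 : R)] {x y x' y' : R} (hsum : x + y = x' + y')
    (hsq : x ^ 2 + y ^ 2 = x' ^ 2 + y' ^ 2) : (x = x' ∧ y = y') ∨ (x = y' ∧ y = x') := by
  have hprod : x * y = x' * y' :=
    mul_left_cancel₀ (NeZero.ne (2 : R)) (by linear_combination (x + y + x' + y') * hsum - hsq)
  have hroots : (x - x') * (x - y') = 0 := by linear_combination x * hsum - hprod
  rcases mul_eq_zero.1 hroots with h | h
  · exact Or.inl ⟨sub_eq_zero.1 h, by linear_combination hsum - h⟩
  · exact Or.inr ⟨sub_eq_zero.1 h, by linear_combination hsum - h⟩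

theorem stmt11_general (q₁ q₂ q₁' q₂' : ℤ)
    (heq : (q₁ : ℝ) + q₂ + Real.sqrt ((q₁ : ℝ) ^ 2 + (q₂ : ℝ) ^ 2)
        = (q₁' : ℝ) + q₂' + Real.sqrt ((q₁' : ℝ) ^ 2 + (q₂' : ℝ) ^ 2))
    (hns : ¬ ∃ r : ℤ, q₁ ^ 2 + q₂ ^ 2 = r ^ 2) :
    (q₁ = q₁' ∧ q₂ = q₂') ∨ (q₁ = q₂' ∧ q₂ = q₁') := by
  have hirr : Irrational √(((q₁ ^ 2 + q₂ ^ 2 : ℤ) : ℚ) : ℝ) := by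
    rw [Rat.cast_intCast, irrational_sqrt_intCast_iff_of_nonneg (by positivity)]
    rintro ⟨r, hr⟩
    exact hns ⟨r, by rw [hr, sq]⟩
  obtain ⟨hsum, hsq⟩ := hirr.eq_and_eq_of_add_sqrt_eq
    (a := ((q₁ + q₂ : ℤ) : ℚ)) (b := ((q₁' + q₂' : ℤ) : ℚ)) (n := ((q₁' ^ 2 + q₂' ^ 2 : ℤ) : ℚ))
    (by push_cast; linarith)
  exact eq_and_eq_or_eq_and_eq_of_add_eq_of_sq_add_sq_eq (mod_cast hsum) (mod_cast hsq)

theorem stmt11 (q₁ q₂ q₁' q₂' : ℤ) (h₁ : 0 < q₁) (h₂ : 0 < q₂) (h₁' : 0 < q₁') (h₂' : 0 < q₂')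
    (heq : (q₁ : ℝ) + q₂ + Real.sqrt ((q₁ : ℝ) ^ 2 + (q₂ : ℝ) ^ 2)
        = (q₁' : ℝ) + q₂' + Real.sqrt ((q₁' : ℝ) ^ 2 + (q₂' : ℝ) ^ 2))
    (hns : ¬ ∃ r : ℤ, q₁ ^ 2 + q₂ ^ 2 = r ^ 2)
    (hns' : ¬ ∃ r : ℤ, q₁' ^ 2 + q₂' ^ 2 = r ^ 2) :
    (q₁ = q₁' ∧ q₂ = q₂') ∨ (q₁ = q₂' ∧ q₂ = q₁') :=
  stmt11_general q₁ q₂ q₁' q₂' heq hns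
end
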